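/- Let μ, μ_m be non-atomic Borel probability measures on [0,1] with distribution functions F(x) = μ([0,x]) and F_m(x) = μ_m([0,x]). Then for all z ∈ ℝ, |sinq'(z) − sinq_m'(z)| ≤ 2 ‖F − F_m‖_∞ Σ_{n≥1} (2n+1) z^{2n} / (n−1)! and |sinp'(z) − sinp_m'(z)| ≤ 2 ‖F − F_m‖_∞ Σ_{n≥1} (2n+1) z^{2n} / (n−1)!, where sinp' and sinq' denote the derivatives of the real functions z ↦ sinp(z), z ↦ sinq(z). -/

import Mathlib

open MeasureTheory Real Filter

/-- Iterated integrals `p_n` w.r.t. a measure `ν`: `p_0 = 1`,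
`p_n(x) = ∫_0^x p_{n-1} dν` if `n` odd, `p_n(x) = ∫_0^x p_{n-1} dt` if `n` even. -/
noncomputable def pIter (ν : Measure ℝ) : ℕ → ℝ → ℝ
  | 0 => fun _ => 1
  | (n+1) => fun x =>
      if Odd (n+1) then ∫ t in Set.Ioc (0:ℝ) x, pIter ν n t ∂ν
      else ∫ t in Set.Ioc (0:ℝ) x, pIter ν n t

/-- Iterated integrals `q_n` w.r.t. a measure `ν`: `q_0 = 1`,
`q_n(x) = ∫_0^x q_{n-1} dt` if `n` odd, `q_n(x) = ∫_0^x q_{n-1} dν` if `n` even. -/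
noncomputable def qIter (ν : Measure ℝ) : ℕ → ℝ → ℝ
  | 0 => fun _ => 1
  | (n+1) => fun x =>
      if Odd (n+1) then ∫ t in Set.Ioc (0:ℝ) x, qIter ν n t
      else ∫ t in Set.Ioc (0:ℝ) x, qIter ν n t ∂ν

noncomputable def spF (ν : Measure ℝ) (z x : ℝ) : ℝ :=
  ∑' n : ℕ, (-1)^n * z^(2*n+1) * pIter ν (2*n+1) x

noncomputable def sqF (ν : Measure ℝ) (z x : ℝ) : ℝ :=
  ∑' n : ℕ, (-1)^n * z^(2*n+1) * qIter ν (2*n+1) x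

noncomputable def cpF (ν : Measure ℝ) (z x : ℝ) : ℝ :=
  ∑' n : ℕ, (-1)^n * z^(2*n) * pIter ν (2*n) x

noncomputable def cqF (ν : Measure ℝ) (z x : ℝ) : ℝ :=
  ∑' n : ℕ, (-1)^n * z^(2*n) * qIter ν (2*n) x

noncomputable def sinpF (ν : Measure ℝ) (z : ℝ) : ℝ := spF ν z 1
noncomputable def sinqF (ν : Measure ℝ) (z : ℝ) : ℝ := sqF ν z 1
noncomputable def cospF (ν : Measure ℝ) (z : ℝ) : ℝ := cpF ν z 1
noncomputable def cosqF (ν : Measure ℝ) (z : ℝ) : ℝ := cqF ν z 1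

/-- distribution function `F(x) = ν [0,x]` -/
noncomputable def distF (ν : Measure ℝ) (x : ℝ) : ℝ := (ν (Set.Icc 0 x)).toReal

/-- supremum distance of two functions over `[0,1]` -/
noncomputable def supDist (f g : ℝ → ℝ) : ℝ := ⨆ x : Set.Icc (0:ℝ) 1, |f x.1 - g x.1|
open MeasureTheory Real Filter Set

section helpers

variable {f : ℝ → ℝ}

lemma mono_integrableOn (hfm : Monotone f) (ρ : Measure ℝ) [IsFiniteMeasureOnCompacts ρ]
    (x : ℝ) : IntegrableOn f (Set.Ioc 0 x) ρ :=
  ((hfm.monotoneOn _).integrableOn_isCompact (isCompact_Icc (a := (0:ℝ)) (b := x))).mono_set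
    Set.Ioc_subset_Icc_self

lemma step_nonneg (hf0 : ∀ t, 0 ≤ f t) (ρ : Measure ℝ) (x : ℝ) :
    0 ≤ ∫ t in Set.Ioc (0:ℝ) x, f t ∂ρ :=
  integral_nonneg fun t => hf0 t

lemma step_mono (hf0 : ∀ t, 0 ≤ f t) (hfm : Monotone f) (ρ : Measure ℝ)
    [IsFiniteMeasureOnCompacts ρ] : Monotone (fun x => ∫ t in Set.Ioc (0:ℝ) x, f t ∂ρ) := by
  intro x y hxy
  exact setIntegral_mono_set (mono_integrableOn hfm ρ y)
    (Filter.Eventually.of_forall hf0)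
    (HasSubset.Subset.eventuallyLE (Set.Ioc_subset_Ioc_right hxy))

/-- bound of an integral against a finite measure dominated by 1 -/
lemma step_le_const (hf0 : ∀ t, 0 ≤ f t) (hfm : Monotone f) {ρ : Measure ℝ}
    [IsProbabilityMeasure ρ] {x C : ℝ} (hC : ∀ t ∈ Set.Ioc (0:ℝ) x, f t ≤ C) (hC0 : 0 ≤ C) :
    ∫ t in Set.Ioc (0:ℝ) x, f t ∂ρ ≤ C := by
  calc ∫ t in Set.Ioc (0:ℝ) x, f t ∂ρ ≤ ∫ _t in Set.Ioc (0:ℝ) x, C ∂ρ := by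
        apply setIntegral_mono_on (mono_integrableOn hfm ρ x)
          (integrableOn_const (measure_lt_top _ _).ne) measurableSet_Ioc hC
    _ = C * (ρ (Set.Ioc 0 x)).toReal := by rw [setIntegral_const, smul_eq_mul, mul_comm, measureReal_def]
    _ ≤ C * 1 := by
        apply mul_le_mul_of_nonneg_left _ hC0
        exact ENNReal.toReal_le_of_le_ofReal one_pos.le (by simpa using prob_le_one)
    _ = C := mul_one C

end helpers

section iter

variable (ν : Measure ℝ) [IsFiniteMeasureOnCompacts ν]

lemma pIter_succ (n : ℕ) (x : ℝ) : pIter ν (n+1) x =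
    if Odd (n+1) then ∫ t in Set.Ioc (0:ℝ) x, pIter ν n t ∂ν
    else ∫ t in Set.Ioc (0:ℝ) x, pIter ν n t := rfl

lemma qIter_succ (n : ℕ) (x : ℝ) : qIter ν (n+1) x =
    if Odd (n+1) then ∫ t in Set.Ioc (0:ℝ) x, qIter ν n t
    else ∫ t in Set.Ioc (0:ℝ) x, qIter ν n t ∂ν := rfl

lemma pIter_nonneg_mono (n : ℕ) : (∀ x, 0 ≤ pIter ν n x) ∧ Monotone (pIter ν n) := by
  induction n with
  | zero => exact ⟨fun x => one_pos.le, monotone_const⟩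
  | succ n ih =>
      constructor
      · intro x
        rw [pIter_succ]
        split <;> exact step_nonneg ih.1 _ x
      · have := step_mono ih.1 ih.2
        intro x y hxy
        rw [pIter_succ, pIter_succ]
        split
        · exact step_mono ih.1 ih.2 ν hxy
        · exact step_mono ih.1 ih.2 volume hxy

lemma qIter_nonneg_mono (n : ℕ) : (∀ x, 0 ≤ qIter ν n x) ∧ Monotone (qIter ν n) := by
  induction n with
  | zero => exact ⟨fun x => one_pos.le, monotone_const⟩
  | succ n ih =>
      constructor
      · intro x
        rw [qIter_succ]
        split <;> exact step_nonneg ih.1 _ x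
      · intro x y hxy
        rw [qIter_succ, qIter_succ]
        split
        · exact step_mono ih.1 ih.2 volume hxy
        · exact step_mono ih.1 ih.2 ν hxy

end iter

section parity

variable (ν : Measure ℝ) [IsFiniteMeasureOnCompacts ν]

lemma pIter_odd' (n : ℕ) (x : ℝ) :
    pIter ν (2*n+1) x = ∫ t in Set.Ioc (0:ℝ) x, pIter ν (2*n) t ∂ν := by
  rw [show 2*n+1 = (2*n)+1 from rfl, pIter_succ, if_pos ⟨n, by ring⟩]

lemma pIter_even' (n : ℕ) (x : ℝ) :
    pIter ν (2*n+2) x = ∫ t in Set.Ioc (0:ℝ) x, pIter ν (2*n+1) t := by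
  rw [show 2*n+2 = (2*n+1)+1 from rfl, pIter_succ, if_neg]
  simp [Nat.odd_iff]; omega

lemma qIter_odd' (n : ℕ) (x : ℝ) :
    qIter ν (2*n+1) x = ∫ t in Set.Ioc (0:ℝ) x, qIter ν (2*n) t := by
  rw [show 2*n+1 = (2*n)+1 from rfl, qIter_succ, if_pos ⟨n, by ring⟩]

lemma qIter_even' (n : ℕ) (x : ℝ) :
    qIter ν (2*n+2) x = ∫ t in Set.Ioc (0:ℝ) x, qIter ν (2*n+1) t ∂ν := by
  rw [show 2*n+2 = (2*n+1)+1 from rfl, qIter_succ, if_neg]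
  simp [Nat.odd_iff]; omega

end parity

lemma integral_pow_Ioc (n : ℕ) {x : ℝ} (hx : 0 ≤ x) :
    ∫ t in Set.Ioc (0:ℝ) x, t^n = x^(n+1)/(n+1) := by
  rw [← intervalIntegral.integral_of_le hx, integral_pow]
  simp

section bounds

variable (ν : Measure ℝ) [IsProbabilityMeasure ν]

lemma le_pow_div_factorial_of_le {t x : ℝ} (n : ℕ) (h0 : 0 ≤ t) (h : t ≤ x) :
    t^n/(n.factorial : ℝ) ≤ x^n/(n.factorial : ℝ) := by
  gcongr

lemma pow_div_factorial_nonneg {x : ℝ} (n : ℕ) (h0 : 0 ≤ x) :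
    0 ≤ x^n/(n.factorial : ℝ) :=
  div_nonneg (pow_nonneg h0 n) (Nat.cast_nonneg _)

lemma integral_pow_div_factorial_Ioc (n : ℕ) {x : ℝ} (hx : 0 ≤ x) :
    ∫ t in Set.Ioc (0:ℝ) x, t^n/(n.factorial : ℝ)
      = x^(n+1)/((n+1).factorial : ℝ) := by
  have h1 : (fun t : ℝ => t^n/(n.factorial : ℝ)) = fun t : ℝ => (n.factorial : ℝ)⁻¹ * t^n := by
    funext t; ring
  have h2 : ((n+1).factorial : ℝ) = ((n:ℝ)+1) * (n.factorial : ℝ) := by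
    rw [Nat.factorial_succ]; push_cast; ring
  have h3 : ((n:ℝ)+1) ≠ 0 := by positivity
  have h4 : (n.factorial : ℝ) ≠ 0 := by positivity
  rw [h1, integral_const_mul, integral_pow_Ioc n hx, h2]
  field_simp

lemma pIter_le (n : ℕ) : ∀ x ∈ Set.Icc (0:ℝ) 1,
    pIter ν (2*n) x ≤ x^n/(n.factorial : ℝ) ∧
    pIter ν (2*n+1) x ≤ x^n/(n.factorial : ℝ) := by
  induction n with
  | zero =>
      intro x hx
      constructor
      · simp [pIter]
      · rw [pow_zero, Nat.factorial_zero, pIter_odd']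
        simpa using step_le_const (f := pIter ν 0) (C := 1) (fun t => one_pos.le)
          (pIter_nonneg_mono ν 0).2 (fun t _ => le_of_eq rfl) one_pos.le
  | succ n ih =>
      have heven : ∀ y ∈ Set.Icc (0:ℝ) 1,
          pIter ν (2*(n+1)) y ≤ y^(n+1)/((n+1).factorial : ℝ) := by
        intro y hy
        rw [show 2*(n+1) = 2*n+2 by ring, pIter_even']
        calc ∫ t in Set.Ioc (0:ℝ) y, pIter ν (2*n+1) t
            ≤ ∫ t in Set.Ioc (0:ℝ) y, t^n/(n.factorial : ℝ) := by
              apply setIntegral_mono_on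
                (mono_integrableOn (pIter_nonneg_mono ν (2*n+1)).2 volume y)
                ((continuous_pow n |>.div_const _).integrableOn_Ioc)
                measurableSet_Ioc
              intro t ht
              exact (ih t ⟨ht.1.le, ht.2.trans hy.2⟩).2
          _ = y^(n+1)/((n+1).factorial : ℝ) := integral_pow_div_factorial_Ioc n hy.1
      intro x hx
      refine ⟨heven x hx, ?_⟩
      rw [show 2*(n+1)+1 = 2*(n+1)+1 from rfl, pIter_odd']
      apply step_le_const (pIter_nonneg_mono ν (2*(n+1))).1 (pIter_nonneg_mono ν (2*(n+1))).2
        (fun t ht => ?_) (pow_div_factorial_nonneg _ hx.1)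
      calc pIter ν (2*(n+1)) t ≤ t^(n+1)/((n+1).factorial : ℝ) :=
            heven t ⟨ht.1.le, ht.2.trans hx.2⟩
        _ ≤ x^(n+1)/((n+1).factorial : ℝ) :=
            le_pow_div_factorial_of_le _ ht.1.le ht.2

lemma qIter_le (n : ℕ) : ∀ x ∈ Set.Icc (0:ℝ) 1,
    qIter ν (2*n) x ≤ x^n/(n.factorial : ℝ) ∧
    qIter ν (2*n+1) x ≤ x^(n+1)/((n+1).factorial : ℝ) := by
  induction n with
  | zero =>
      intro x hx
      constructor
      · simp [qIter]
      · rw [show 2*0+1 = 2*0+1 from rfl, qIter_odd']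
        have : ∫ t in Set.Ioc (0:ℝ) x, qIter ν (2*0) t = ∫ t in Set.Ioc (0:ℝ) x, (1:ℝ) := by
          rfl
        rw [this]
        simp [Real.volume_Ioc, hx.1, ENNReal.toReal_ofReal, max_eq_left hx.1]
  | succ n ih =>
      have hodd : ∀ y ∈ Set.Icc (0:ℝ) 1,
          qIter ν (2*n+1) y ≤ y^(n+1)/((n+1).factorial : ℝ) := fun y hy => (ih y hy).2
      intro x hx
      have heven : qIter ν (2*(n+1)) x ≤ x^(n+1)/((n+1).factorial : ℝ) := by
        rw [show 2*(n+1) = 2*n+2 by ring, qIter_even']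
        apply step_le_const (qIter_nonneg_mono ν (2*n+1)).1 (qIter_nonneg_mono ν (2*n+1)).2
          (fun t ht => ?_) (pow_div_factorial_nonneg _ hx.1)
        calc qIter ν (2*n+1) t ≤ t^(n+1)/((n+1).factorial : ℝ) :=
              hodd t ⟨ht.1.le, ht.2.trans hx.2⟩
          _ ≤ x^(n+1)/((n+1).factorial : ℝ) :=
              le_pow_div_factorial_of_le _ ht.1.le ht.2
      refine ⟨heven, ?_⟩
      rw [qIter_odd']
      calc ∫ t in Set.Ioc (0:ℝ) x, qIter ν (2*(n+1)) t
          ≤ ∫ t in Set.Ioc (0:ℝ) x, t^(n+1)/((n+1).factorial : ℝ) := by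
            apply setIntegral_mono_on
              (mono_integrableOn (qIter_nonneg_mono ν (2*(n+1))).2 volume x)
              ((continuous_pow (n+1) |>.div_const _).integrableOn_Ioc)
              measurableSet_Ioc
            intro t ht
            have := (ih t ⟨ht.1.le, ht.2.trans hx.2⟩)
            rw [show 2*(n+1) = 2*n+2 by ring, qIter_even']
            apply step_le_const (qIter_nonneg_mono ν (2*n+1)).1 (qIter_nonneg_mono ν (2*n+1)).2
              (fun s hs => ?_) (pow_div_factorial_nonneg _ ht.1.le)
            calc qIter ν (2*n+1) s ≤ s^(n+1)/((n+1).factorial : ℝ) :=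
                  hodd s ⟨hs.1.le, (hs.2.trans ht.2).trans hx.2⟩
              _ ≤ t^(n+1)/((n+1).factorial : ℝ) :=
                  le_pow_div_factorial_of_le _ hs.1.le hs.2
        _ = x^(n+2)/((n+2).factorial : ℝ) := integral_pow_div_factorial_Ioc (n+1) hx.1

end bounds

section fubini

lemma fubini_primitive (ρ : Measure ℝ) [IsFiniteMeasure ρ] {f : ℝ → ℝ} (hf0 : ∀ t, 0 ≤ f t)
    (hfm : Monotone f) (x : ℝ) :
    ∫ t in Set.Ioc (0:ℝ) x, (∫ s in Set.Ioc (0:ℝ) t, f s) ∂ρ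
      = ∫ s in Set.Ioc (0:ℝ) x, f s * (ρ (Set.Icc s x)).toReal := by
  have hfmeas : Measurable f := hfm.measurable
  set G : ℝ → ℝ → ℝ := fun t s => if s ≤ t then f s else 0 with hG
  have hunc : Function.uncurry G = Set.indicator {p : ℝ × ℝ | p.2 ≤ p.1} (fun p => f p.2) := by
    funext p
    simp only [Function.uncurry, hG, Set.indicator_apply, Set.mem_setOf_eq]
  have hmeasset : MeasurableSet {p : ℝ × ℝ | p.2 ≤ p.1} :=
    measurableSet_le measurable_snd measurable_fst
  have hintegH : Integrable (Function.uncurry G)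
      ((ρ.restrict (Set.Ioc 0 x)).prod (volume.restrict (Set.Ioc 0 x))) := by
    rw [Measure.prod_restrict]
    haveI : IsFiniteMeasure ((ρ.prod volume).restrict (Set.Ioc 0 x ×ˢ Set.Ioc 0 x)) := by
      constructor
      rw [Measure.restrict_apply_univ, Measure.prod_prod]
      exact ENNReal.mul_lt_top (measure_lt_top _ _) (by simp [Real.volume_Ioc])
    apply Integrable.mono' (g := fun _ => f x)
      (integrable_const _)
    · rw [hunc]
      exact ((hfmeas.comp measurable_snd).indicator hmeasset).aestronglyMeasurable
    · rw [ae_restrict_iff' (measurableSet_Ioc.prod measurableSet_Ioc)]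
      apply Filter.Eventually.of_forall
      rintro ⟨t, s⟩ ⟨ht, hs⟩
      simp only [hunc, Set.indicator_apply, Set.mem_setOf_eq]
      split
      · rw [Real.norm_eq_abs, abs_of_nonneg (hf0 s)]
        exact hfm hs.2
      · simp [hf0 x]
  have hswap := integral_integral_swap hintegH
  have hleft : (∫ t, ∫ s, G t s ∂(volume.restrict (Set.Ioc 0 x)) ∂(ρ.restrict (Set.Ioc 0 x)))
      = ∫ t in Set.Ioc (0:ℝ) x, (∫ s in Set.Ioc (0:ℝ) t, f s) ∂ρ := by
    apply setIntegral_congr_fun measurableSet_Ioc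
    intro t ht
    have : ∀ s, G t s = Set.indicator (Set.Iic t) f s := by
      intro s; simp [hG, Set.indicator_apply]
    simp_rw [this]
    rw [setIntegral_indicator measurableSet_Iic, Set.Ioc_inter_Iic,
      min_eq_right ht.2]
  have hright : (∫ s, ∫ t, G t s ∂(ρ.restrict (Set.Ioc 0 x)) ∂(volume.restrict (Set.Ioc 0 x)))
      = ∫ s in Set.Ioc (0:ℝ) x, f s * (ρ (Set.Icc s x)).toReal := by
    apply setIntegral_congr_fun measurableSet_Ioc
    intro s hs
    have : ∀ t, G t s = Set.indicator (Set.Ici s) (fun _ => f s) t := by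
      intro t; simp [hG, Set.indicator_apply]
    simp_rw [this]
    rw [integral_indicator_const _ measurableSet_Ici, measureReal_def, Measure.restrict_apply measurableSet_Ici]
    have hset : Set.Ici s ∩ Set.Ioc 0 x = Set.Icc s x := by
      ext t
      simp only [Set.mem_inter_iff, Set.mem_Ici, Set.mem_Ioc, Set.mem_Icc]
      constructor
      · rintro ⟨h1, _, h3⟩; exact ⟨h1, h3⟩
      · rintro ⟨h1, h2⟩; exact ⟨h1, lt_of_lt_of_le hs.1 h1, h2⟩
    rw [hset, smul_eq_mul, mul_comm]
  rw [← hleft, hswap, hright]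

end fubini

section dist

variable {ν ν' : Measure ℝ} [IsProbabilityMeasure ν] [IsProbabilityMeasure ν']
  [NullSingletonClass ν] [NullSingletonClass ν']

lemma distF_mem (t : ℝ) : distF ν t ∈ Set.Icc (0:ℝ) 1 := by
  constructor
  · exact ENNReal.toReal_nonneg
  · exact ENNReal.toReal_le_of_le_ofReal one_pos.le (by simpa using prob_le_one)

lemma abs_distF_sub_le {t : ℝ} (ht : t ∈ Set.Icc (0:ℝ) 1) :
    |distF ν t - distF ν' t| ≤ supDist (distF ν) (distF ν') := by
  have hbdd : BddAbove (Set.range fun x : Set.Icc (0:ℝ) 1 => |distF ν x.1 - distF ν' x.1|) := by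
    refine ⟨2, ?_⟩
    rintro y ⟨u, rfl⟩
    calc |distF ν u.1 - distF ν' u.1| ≤ |distF ν u.1| + |distF ν' u.1| := abs_sub _ _
      _ ≤ 1 + 1 := by
          gcongr
          · rw [abs_of_nonneg (distF_mem u.1).1]; exact (distF_mem u.1).2
          · rw [abs_of_nonneg (distF_mem u.1).1]; exact (distF_mem u.1).2
      _ = 2 := by norm_num
  exact le_ciSup hbdd (⟨t, ht⟩ : Set.Icc (0:ℝ) 1)

lemma supDist_nonneg : 0 ≤ supDist (distF ν) (distF ν') :=
  Real.iSup_nonneg fun x => abs_nonneg _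

lemma distF_one (hsupp : ν (Set.Icc (0:ℝ) 1)ᶜ = 0) : distF ν 1 = 1 := by
  have h := prob_compl_eq_zero_iff (μ := ν) (s := Set.Icc (0:ℝ) 1) measurableSet_Icc
  rw [distF, h.1 hsupp]
  simp

lemma toReal_Ioc_eq_distF (t : ℝ) :
    (ν (Set.Ioc 0 t)).toReal = distF ν t := by
  rw [distF, measure_congr Ioc_ae_eq_Icc]

lemma toReal_Icc_eq (s x : ℝ) (hs : s ∈ Set.Ioc (0:ℝ) x) :
    (ν (Set.Icc s x)).toReal = distF ν x - distF ν s := by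
  have hIoc : ν (Set.Icc s x) = ν (Set.Ioc s x) := (measure_congr (Ioc_ae_eq_Icc)).symm
  have hsplit : ν (Set.Icc 0 x) = ν (Set.Icc 0 s) + ν (Set.Ioc s x) := by
    rw [← Set.Icc_union_Ioc_eq_Icc hs.1.le hs.2]
    exact measure_union ((Set.Iic_disjoint_Ioc le_rfl).mono Set.Icc_subset_Iic_self le_rfl) measurableSet_Ioc
  have hfin1 : ν (Set.Icc 0 s) ≠ ⊤ := (measure_lt_top _ _).ne
  have hfin2 : ν (Set.Ioc s x) ≠ ⊤ := (measure_lt_top _ _).ne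
  rw [hIoc]
  rw [distF, distF, hsplit, ENNReal.toReal_add hfin1 hfin2]
  ring

end dist

section diffnu

variable {ν ν' : Measure ℝ} [IsProbabilityMeasure ν] [IsProbabilityMeasure ν']
  [NullSingletonClass ν] [NullSingletonClass ν']

lemma integ_aux (ρ : Measure ℝ) [IsFiniteMeasure ρ] {f : ℝ → ℝ} (hf0 : ∀ t, 0 ≤ f t)
    (hfm : Monotone f) (x : ℝ) :
    IntegrableOn (fun s => f s * (ρ (Set.Icc s x)).toReal) (Set.Ioc 0 x) := by
  have hanti : Antitone (fun s => (ρ (Set.Icc s x)).toReal) := fun a b hab =>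
    ENNReal.toReal_mono (measure_lt_top _ _).ne (measure_mono (Set.Icc_subset_Icc_left hab))
  apply Integrable.mono' (g := fun _ => f x * (ρ Set.univ).toReal)
    (integrableOn_const (by simp [Real.volume_Ioc]))
    ((hfm.measurable.mul hanti.measurable).aestronglyMeasurable)
  rw [ae_restrict_iff' measurableSet_Ioc]
  apply Filter.Eventually.of_forall
  intro s hs
  simp only [Real.norm_eq_abs, Pi.mul_apply]
  rw [abs_of_nonneg (mul_nonneg (hf0 s) ENNReal.toReal_nonneg)]
  apply mul_le_mul (hfm hs.2)
    (ENNReal.toReal_mono (measure_lt_top _ _).ne (measure_mono (Set.subset_univ _)))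
    ENNReal.toReal_nonneg (hf0 x)

lemma abs_setIntegral_le (ρ : Measure ℝ) [IsProbabilityMeasure ρ] {g : ℝ → ℝ} {x C : ℝ}
    (hint : IntegrableOn g (Set.Ioc 0 x) ρ)
    (hC : ∀ t ∈ Set.Ioc (0:ℝ) x, |g t| ≤ C) (hC0 : 0 ≤ C) :
    |∫ t in Set.Ioc (0:ℝ) x, g t ∂ρ| ≤ C := by
  calc |∫ t in Set.Ioc (0:ℝ) x, g t ∂ρ| ≤ ∫ t in Set.Ioc (0:ℝ) x, |g t| ∂ρ :=
        by simpa [Real.norm_eq_abs] using norm_integral_le_integral_norm g (μ := ρ.restrict (Set.Ioc 0 x))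
    _ ≤ ∫ _t in Set.Ioc (0:ℝ) x, C ∂ρ :=
        setIntegral_mono_on hint.abs (integrableOn_const (measure_lt_top _ _).ne)
          measurableSet_Ioc hC
    _ = C * (ρ (Set.Ioc 0 x)).toReal := by rw [setIntegral_const, smul_eq_mul, mul_comm, measureReal_def]
    _ ≤ C * 1 := by
        apply mul_le_mul_of_nonneg_left _ hC0
        exact ENNReal.toReal_le_of_le_ofReal one_pos.le (by simpa using prob_le_one)
    _ = C := mul_one C

lemma diff_nu {f : ℝ → ℝ} (hf0 : ∀ t, 0 ≤ f t) (hfm : Monotone f) {x K : ℝ}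
    (hK : ∀ s ∈ Set.Ioc (0:ℝ) x,
      |(distF ν x - distF ν' x) - (distF ν s - distF ν' s)| ≤ K) :
    |(∫ t in Set.Ioc (0:ℝ) x, (∫ s in Set.Ioc (0:ℝ) t, f s) ∂ν)
      - ∫ t in Set.Ioc (0:ℝ) x, (∫ s in Set.Ioc (0:ℝ) t, f s) ∂ν'|
      ≤ K * ∫ s in Set.Ioc (0:ℝ) x, f s := by
  rw [fubini_primitive ν hf0 hfm x, fubini_primitive ν' hf0 hfm x,
    ← integral_sub (integ_aux ν hf0 hfm x) (integ_aux ν' hf0 hfm x)]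
  have key : ∀ s ∈ Set.Ioc (0:ℝ) x,
      |f s * (ν (Set.Icc s x)).toReal - f s * (ν' (Set.Icc s x)).toReal| ≤ f s * K := by
    intro s hs
    rw [← mul_sub, abs_mul, abs_of_nonneg (hf0 s), toReal_Icc_eq s x hs, toReal_Icc_eq s x hs]
    apply mul_le_mul_of_nonneg_left _ (hf0 s)
    calc |distF ν x - distF ν s - (distF ν' x - distF ν' s)|
        = |(distF ν x - distF ν' x) - (distF ν s - distF ν' s)| := by ring_nf
      _ ≤ K := hK s hs
  have habs : |∫ s in Set.Ioc (0:ℝ) x,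
        (f s * (ν (Set.Icc s x)).toReal - f s * (ν' (Set.Icc s x)).toReal)|
      ≤ ∫ s in Set.Ioc (0:ℝ) x,
        |f s * (ν (Set.Icc s x)).toReal - f s * (ν' (Set.Icc s x)).toReal| := by
    simpa [Real.norm_eq_abs] using norm_integral_le_integral_norm
      (μ := volume.restrict (Set.Ioc 0 x))
      (fun s => f s * (ν (Set.Icc s x)).toReal - f s * (ν' (Set.Icc s x)).toReal)
  apply habs.trans
  calc (∫ s in Set.Ioc (0:ℝ) x,
        |f s * (ν (Set.Icc s x)).toReal - f s * (ν' (Set.Icc s x)).toReal|)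
      ≤ ∫ s in Set.Ioc (0:ℝ) x, f s * K :=
        setIntegral_mono_on (((integ_aux ν hf0 hfm x).sub (integ_aux ν' hf0 hfm x)).abs)
          ((mono_integrableOn hfm volume x).mul_const K) measurableSet_Ioc key
    _ = K * ∫ s in Set.Ioc (0:ℝ) x, f s := by rw [integral_mul_const, mul_comm]

end diffnu

section maindiff

variable {ν ν' : Measure ℝ} [IsProbabilityMeasure ν] [IsProbabilityMeasure ν']
  [NullSingletonClass ν] [NullSingletonClass ν']

lemma leb_step_diff {g g' : ℝ → ℝ} (hg : Monotone g) (hg' : Monotone g') {x C : ℝ} {k : ℕ}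
    (hx : 0 ≤ x) (hC : 0 ≤ C)
    (hb : ∀ t ∈ Set.Ioc (0:ℝ) x, |g t - g' t| ≤ C * (t^k/(k.factorial:ℝ))) :
    |(∫ t in Set.Ioc (0:ℝ) x, g t) - ∫ t in Set.Ioc (0:ℝ) x, g' t|
      ≤ C * (x^(k+1)/((k+1).factorial:ℝ)) := by
  rw [← integral_sub (mono_integrableOn hg volume x) (mono_integrableOn hg' volume x)]
  have habs : |∫ t in Set.Ioc (0:ℝ) x, (g t - g' t)|
      ≤ ∫ t in Set.Ioc (0:ℝ) x, |g t - g' t| := by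
    simpa [Real.norm_eq_abs] using norm_integral_le_integral_norm
      (μ := volume.restrict (Set.Ioc 0 x)) (fun t => g t - g' t)
  apply habs.trans
  calc (∫ t in Set.Ioc (0:ℝ) x, |g t - g' t|)
      ≤ ∫ t in Set.Ioc (0:ℝ) x, C * (t^k/(k.factorial:ℝ)) :=
        setIntegral_mono_on
          (((mono_integrableOn hg volume x).sub (mono_integrableOn hg' volume x)).abs)
          (continuous_const.mul ((continuous_pow k).div_const _)).integrableOn_Ioc
          measurableSet_Ioc hb
    _ = C * (x^(k+1)/((k+1).factorial:ℝ)) := by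
        rw [integral_const_mul, integral_pow_div_factorial_Ioc k hx]

lemma hK_two {x : ℝ} (hx : x ∈ Set.Icc (0:ℝ) 1) : ∀ s ∈ Set.Ioc (0:ℝ) x,
    |(distF ν x - distF ν' x) - (distF ν s - distF ν' s)|
      ≤ 2 * supDist (distF ν) (distF ν') := by
  intro s hs
  have hsI : s ∈ Set.Icc (0:ℝ) 1 := ⟨hs.1.le, hs.2.trans hx.2⟩
  calc |(distF ν x - distF ν' x) - (distF ν s - distF ν' s)|
      ≤ |distF ν x - distF ν' x| + |distF ν s - distF ν' s| := abs_sub _ _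
    _ ≤ supDist (distF ν) (distF ν') + supDist (distF ν) (distF ν') :=
        add_le_add (abs_distF_sub_le hx) (abs_distF_sub_le hsI)
    _ = 2 * supDist (distF ν) (distF ν') := by ring

lemma qdiff (n : ℕ) : ∀ x ∈ Set.Icc (0:ℝ) 1,
    |qIter ν (2*n) x - qIter ν' (2*n) x|
      ≤ 2*supDist (distF ν) (distF ν')*n*(x^n/(n.factorial:ℝ))
    ∧ |qIter ν (2*n+1) x - qIter ν' (2*n+1) x|
      ≤ 2*supDist (distF ν) (distF ν')*n*(x^(n+1)/((n+1).factorial:ℝ)) := by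
  set D := supDist (distF ν) (distF ν') with hD
  have hD0 : 0 ≤ D := supDist_nonneg
  induction n with
  | zero =>
      intro x hx
      constructor
      · simp [qIter]
      · rw [qIter_odd', qIter_odd']
        simp [qIter]
  | succ n ih =>
      have heven : ∀ y ∈ Set.Icc (0:ℝ) 1, |qIter ν (2*(n+1)) y - qIter ν' (2*(n+1)) y|
          ≤ 2*D*((n:ℝ)+1)*(y^(n+1)/((n+1).factorial:ℝ)) := by
        intro x hx
        have e1 : qIter ν (2*(n+1)) x = ∫ t in Set.Ioc (0:ℝ) x, qIter ν (2*n+1) t ∂ν := by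
          rw [show 2*(n+1) = 2*n+2 by ring, qIter_even']
        have e2 : qIter ν' (2*(n+1)) x = ∫ t in Set.Ioc (0:ℝ) x, qIter ν' (2*n+1) t ∂ν' := by
          rw [show 2*(n+1) = 2*n+2 by ring, qIter_even']
        have i1 := mono_integrableOn (qIter_nonneg_mono ν (2*n+1)).2 ν x
        have i2 := mono_integrableOn (qIter_nonneg_mono ν' (2*n+1)).2 ν x
        have split : qIter ν (2*(n+1)) x - qIter ν' (2*(n+1)) x
            = (∫ t in Set.Ioc (0:ℝ) x, (qIter ν (2*n+1) t - qIter ν' (2*n+1) t) ∂ν)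
              + ((∫ t in Set.Ioc (0:ℝ) x, qIter ν' (2*n+1) t ∂ν)
                - (∫ t in Set.Ioc (0:ℝ) x, qIter ν' (2*n+1) t ∂ν')) := by
          rw [e1, e2, integral_sub i1 i2]; ring
        rw [split]
        have h1 : |∫ t in Set.Ioc (0:ℝ) x, (qIter ν (2*n+1) t - qIter ν' (2*n+1) t) ∂ν|
            ≤ 2*D*n*(x^(n+1)/((n+1).factorial:ℝ)) := by
          apply abs_setIntegral_le ν (i1.sub i2)
          · intro t ht
            calc |qIter ν (2*n+1) t - qIter ν' (2*n+1) t|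
                ≤ 2*D*n*(t^(n+1)/((n+1).factorial:ℝ)) :=
                  (ih t ⟨ht.1.le, ht.2.trans hx.2⟩).2
              _ ≤ 2*D*n*(x^(n+1)/((n+1).factorial:ℝ)) := by
                  apply mul_le_mul_of_nonneg_left
                    (le_pow_div_factorial_of_le _ ht.1.le ht.2)
                    (mul_nonneg (mul_nonneg (by norm_num : (0:ℝ) ≤ 2) hD0) (Nat.cast_nonneg n))
          · exact mul_nonneg (mul_nonneg (mul_nonneg (by norm_num : (0:ℝ) ≤ 2) hD0)
              (Nat.cast_nonneg n)) (pow_div_factorial_nonneg _ hx.1)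
        have h2 : |(∫ t in Set.Ioc (0:ℝ) x, qIter ν' (2*n+1) t ∂ν)
            - (∫ t in Set.Ioc (0:ℝ) x, qIter ν' (2*n+1) t ∂ν')|
            ≤ 2*D*(x^(n+1)/((n+1).factorial:ℝ)) := by
          have hfe : (fun t => qIter ν' (2*n+1) t)
              = fun t => ∫ s in Set.Ioc (0:ℝ) t, qIter ν' (2*n) s := funext (qIter_odd' ν' n)
          rw [show (∫ t in Set.Ioc (0:ℝ) x, qIter ν' (2*n+1) t ∂ν)
              = ∫ t in Set.Ioc (0:ℝ) x, (∫ s in Set.Ioc (0:ℝ) t, qIter ν' (2*n) s) ∂ν by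
                rw [← hfe],
            show (∫ t in Set.Ioc (0:ℝ) x, qIter ν' (2*n+1) t ∂ν')
              = ∫ t in Set.Ioc (0:ℝ) x, (∫ s in Set.Ioc (0:ℝ) t, qIter ν' (2*n) s) ∂ν' by
                rw [← hfe]]
          have hdn := diff_nu (ν := ν) (ν' := ν') (qIter_nonneg_mono ν' (2*n)).1
            (qIter_nonneg_mono ν' (2*n)).2 (hK_two hx)
          apply hdn.trans
          rw [← qIter_odd']
          apply mul_le_mul_of_nonneg_left _ (mul_nonneg (by norm_num : (0:ℝ) ≤ 2) hD0)
          exact (qIter_le ν' n x hx).2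
        calc |(∫ t in Set.Ioc (0:ℝ) x, (qIter ν (2*n+1) t - qIter ν' (2*n+1) t) ∂ν)
              + ((∫ t in Set.Ioc (0:ℝ) x, qIter ν' (2*n+1) t ∂ν)
                - (∫ t in Set.Ioc (0:ℝ) x, qIter ν' (2*n+1) t ∂ν'))|
            ≤ 2*D*n*(x^(n+1)/((n+1).factorial:ℝ)) + 2*D*(x^(n+1)/((n+1).factorial:ℝ)) :=
              (abs_add_le _ _).trans (add_le_add h1 h2)
          _ = 2*D*((n:ℝ)+1)*(x^(n+1)/((n+1).factorial:ℝ)) := by ring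
      intro x hx
      refine ⟨by exact_mod_cast heven x hx, ?_⟩
      rw [qIter_odd', qIter_odd']
      have hodd : ∀ t ∈ Set.Ioc (0:ℝ) x, |qIter ν (2*(n+1)) t - qIter ν' (2*(n+1)) t|
          ≤ (2*D*((n:ℝ)+1)) * (t^(n+1)/((n+1).factorial:ℝ)) :=
        fun t ht => heven t ⟨ht.1.le, ht.2.trans hx.2⟩
      have := leb_step_diff (qIter_nonneg_mono ν (2*(n+1))).2 (qIter_nonneg_mono ν' (2*(n+1))).2
        hx.1 (mul_nonneg (mul_nonneg (by norm_num : (0:ℝ) ≤ 2) hD0)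
          (by positivity : (0:ℝ) ≤ (n:ℝ)+1)) hodd
      apply this.trans_eq
      push_cast
      ring

lemma pdiff (n : ℕ) : ∀ x ∈ Set.Icc (0:ℝ) 1,
    |pIter ν (2*n+1) x - pIter ν' (2*n+1) x|
      ≤ (2*(n:ℝ)+1)*supDist (distF ν) (distF ν')*(x^n/(n.factorial:ℝ))
    ∧ |pIter ν (2*n+2) x - pIter ν' (2*n+2) x|
      ≤ (2*(n:ℝ)+1)*supDist (distF ν) (distF ν')*(x^(n+1)/((n+1).factorial:ℝ)) := by
  set D := supDist (distF ν) (distF ν') with hD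
  have hD0 : 0 ≤ D := supDist_nonneg
  induction n with
  | zero =>
      have hbase : ∀ y ∈ Set.Icc (0:ℝ) 1, |pIter ν (2*0+1) y - pIter ν' (2*0+1) y|
          ≤ (2*((0:ℕ):ℝ)+1)*D*(y^0/((0:ℕ).factorial:ℝ)) := by
        intro y hy
        rw [pIter_odd', pIter_odd']
        have e1 : (∫ t in Set.Ioc (0:ℝ) y, pIter ν (2*0) t ∂ν) = distF ν y := by
          rw [show pIter ν (2*0) = fun _ => (1:ℝ) from rfl]
          rw [setIntegral_const, smul_eq_mul, mul_one, measureReal_def, toReal_Ioc_eq_distF]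
        have e2 : (∫ t in Set.Ioc (0:ℝ) y, pIter ν' (2*0) t ∂ν') = distF ν' y := by
          rw [show pIter ν' (2*0) = fun _ => (1:ℝ) from rfl]
          rw [setIntegral_const, smul_eq_mul, mul_one, measureReal_def, toReal_Ioc_eq_distF]
        rw [e1, e2]
        simpa using abs_distF_sub_le hy
      intro x hx
      refine ⟨hbase x hx, ?_⟩
      rw [show 2*0+2 = 2*0+2 from rfl, pIter_even', pIter_even']
      have := leb_step_diff (k := 0) (pIter_nonneg_mono ν (2*0+1)).2
        (pIter_nonneg_mono ν' (2*0+1)).2 hx.1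
        (by simpa using hD0 : (0:ℝ) ≤ (2*((0:ℕ):ℝ)+1)*D) (fun t ht => by
          simpa using hbase t ⟨ht.1.le, ht.2.trans hx.2⟩)
      simpa using this
  | succ n ih =>
      have hCn : (0:ℝ) ≤ (2*(n:ℝ)+1)*D := by positivity
      have hodd : ∀ y ∈ Set.Icc (0:ℝ) 1, |pIter ν (2*(n+1)+1) y - pIter ν' (2*(n+1)+1) y|
          ≤ (2*((n:ℝ)+1)+1)*D*(y^(n+1)/((n+1).factorial:ℝ)) := by
        intro x hx
        have e1 : pIter ν (2*(n+1)+1) x = ∫ t in Set.Ioc (0:ℝ) x, pIter ν (2*n+2) t ∂ν := by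
          rw [pIter_odd', show 2*(n+1) = 2*n+2 by ring]
        have e2 : pIter ν' (2*(n+1)+1) x = ∫ t in Set.Ioc (0:ℝ) x, pIter ν' (2*n+2) t ∂ν' := by
          rw [pIter_odd', show 2*(n+1) = 2*n+2 by ring]
        have i1 := mono_integrableOn (pIter_nonneg_mono ν (2*n+2)).2 ν x
        have i2 := mono_integrableOn (pIter_nonneg_mono ν' (2*n+2)).2 ν x
        have split : pIter ν (2*(n+1)+1) x - pIter ν' (2*(n+1)+1) x
            = (∫ t in Set.Ioc (0:ℝ) x, (pIter ν (2*n+2) t - pIter ν' (2*n+2) t) ∂ν)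
              + ((∫ t in Set.Ioc (0:ℝ) x, pIter ν' (2*n+2) t ∂ν)
                - (∫ t in Set.Ioc (0:ℝ) x, pIter ν' (2*n+2) t ∂ν')) := by
          rw [e1, e2, integral_sub i1 i2]; ring
        rw [split]
        have h1 : |∫ t in Set.Ioc (0:ℝ) x, (pIter ν (2*n+2) t - pIter ν' (2*n+2) t) ∂ν|
            ≤ (2*(n:ℝ)+1)*D*(x^(n+1)/((n+1).factorial:ℝ)) := by
          apply abs_setIntegral_le ν (i1.sub i2)
          · intro t ht
            calc |pIter ν (2*n+2) t - pIter ν' (2*n+2) t|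
                ≤ (2*(n:ℝ)+1)*D*(t^(n+1)/((n+1).factorial:ℝ)) :=
                  (ih t ⟨ht.1.le, ht.2.trans hx.2⟩).2
              _ ≤ (2*(n:ℝ)+1)*D*(x^(n+1)/((n+1).factorial:ℝ)) :=
                  mul_le_mul_of_nonneg_left
                    (le_pow_div_factorial_of_le _ ht.1.le ht.2) hCn
          · exact mul_nonneg hCn (pow_div_factorial_nonneg _ hx.1)
        have h2 : |(∫ t in Set.Ioc (0:ℝ) x, pIter ν' (2*n+2) t ∂ν)
            - (∫ t in Set.Ioc (0:ℝ) x, pIter ν' (2*n+2) t ∂ν')|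
            ≤ 2*D*(x^(n+1)/((n+1).factorial:ℝ)) := by
          have hfe : (fun t => pIter ν' (2*n+2) t)
              = fun t => ∫ s in Set.Ioc (0:ℝ) t, pIter ν' (2*n+1) s := funext (pIter_even' ν' n)
          rw [show (∫ t in Set.Ioc (0:ℝ) x, pIter ν' (2*n+2) t ∂ν)
              = ∫ t in Set.Ioc (0:ℝ) x, (∫ s in Set.Ioc (0:ℝ) t, pIter ν' (2*n+1) s) ∂ν by
                rw [← hfe],
            show (∫ t in Set.Ioc (0:ℝ) x, pIter ν' (2*n+2) t ∂ν')
              = ∫ t in Set.Ioc (0:ℝ) x, (∫ s in Set.Ioc (0:ℝ) t, pIter ν' (2*n+1) s) ∂ν' by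
                rw [← hfe]]
          have hdn := diff_nu (ν := ν) (ν' := ν') (pIter_nonneg_mono ν' (2*n+1)).1
            (pIter_nonneg_mono ν' (2*n+1)).2 (hK_two hx)
          apply hdn.trans
          rw [← pIter_even']
          apply mul_le_mul_of_nonneg_left _ (mul_nonneg (by norm_num : (0:ℝ) ≤ 2) hD0)
          have := (pIter_le ν' (n+1) x hx).1
          rwa [show 2*(n+1) = 2*n+2 by ring] at this
        calc |(∫ t in Set.Ioc (0:ℝ) x, (pIter ν (2*n+2) t - pIter ν' (2*n+2) t) ∂ν)
              + ((∫ t in Set.Ioc (0:ℝ) x, pIter ν' (2*n+2) t ∂ν)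
                - (∫ t in Set.Ioc (0:ℝ) x, pIter ν' (2*n+2) t ∂ν'))|
            ≤ (2*(n:ℝ)+1)*D*(x^(n+1)/((n+1).factorial:ℝ))
              + 2*D*(x^(n+1)/((n+1).factorial:ℝ)) :=
              (abs_add_le _ _).trans (add_le_add h1 h2)
          _ = (2*((n:ℝ)+1)+1)*D*(x^(n+1)/((n+1).factorial:ℝ)) := by ring
      intro x hx
      refine ⟨by exact_mod_cast hodd x hx, ?_⟩
      rw [show 2*(n+1)+2 = 2*(n+1)+2 from rfl, pIter_even', pIter_even']
      have hb : ∀ t ∈ Set.Ioc (0:ℝ) x, |pIter ν (2*(n+1)+1) t - pIter ν' (2*(n+1)+1) t|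
          ≤ ((2*((n:ℝ)+1)+1)*D) * (t^(n+1)/((n+1).factorial:ℝ)) :=
        fun t ht => hodd t ⟨ht.1.le, ht.2.trans hx.2⟩
      have := leb_step_diff (pIter_nonneg_mono ν (2*(n+1)+1)).2
        (pIter_nonneg_mono ν' (2*(n+1)+1)).2 hx.1
        (by positivity : (0:ℝ) ≤ (2*((n:ℝ)+1)+1)*D) hb
      apply this.trans_eq
      push_cast
      ring

lemma hK_one (hsupp : ν (Set.Icc (0:ℝ) 1)ᶜ = 0) (hsupp' : ν' (Set.Icc (0:ℝ) 1)ᶜ = 0) :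
    ∀ s ∈ Set.Ioc (0:ℝ) 1, |(distF ν 1 - distF ν' 1) - (distF ν s - distF ν' s)|
      ≤ supDist (distF ν) (distF ν') := by
  intro s hs
  rw [distF_one hsupp, distF_one (ν := ν') hsupp', sub_self, zero_sub, abs_neg]
  exact abs_distF_sub_le ⟨hs.1.le, hs.2⟩

lemma qtop (n : ℕ) : |qIter ν (2*(n+1)+1) 1 - qIter ν' (2*(n+1)+1) 1|
    ≤ 2*supDist (distF ν) (distF ν')/(n.factorial:ℝ) := by
  set D := supDist (distF ν) (distF ν') with hD
  have hD0 : 0 ≤ D := supDist_nonneg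
  have h := (qdiff (ν := ν) (ν' := ν') (n+1) 1 ⟨zero_le_one, le_rfl⟩).2
  apply h.trans
  simp only [one_pow]
  have hfac : ((n+1+1).factorial:ℝ) = ((n:ℝ)+2)*((n:ℝ)+1)*(n.factorial:ℝ) := by
    rw [Nat.factorial_succ, Nat.factorial_succ]; push_cast; ring
  have hkey : ((n+1:ℕ):ℝ)/((n+1+1).factorial:ℝ) ≤ 1/(n.factorial:ℝ) := by
    rw [hfac, div_le_div_iff₀ (by positivity) (by positivity)]
    push_cast
    nlinarith [Nat.cast_nonneg (α := ℝ) n, (by positivity : (0:ℝ) < (n.factorial:ℝ))]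
  calc 2*D*((n+1:ℕ):ℝ)*(1/((n+1+1).factorial:ℝ))
      = 2*D*(((n+1:ℕ):ℝ)/((n+1+1).factorial:ℝ)) := by ring
    _ ≤ 2*D*(1/(n.factorial:ℝ)) :=
        mul_le_mul_of_nonneg_left hkey (by positivity)
    _ = 2*D/(n.factorial:ℝ) := by ring

lemma ptop (hsupp : ν (Set.Icc (0:ℝ) 1)ᶜ = 0) (hsupp' : ν' (Set.Icc (0:ℝ) 1)ᶜ = 0) (n : ℕ) :
    |pIter ν (2*(n+1)+1) 1 - pIter ν' (2*(n+1)+1) 1|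
      ≤ 2*supDist (distF ν) (distF ν')/(n.factorial:ℝ) := by
  set D := supDist (distF ν) (distF ν') with hD
  have hD0 : 0 ≤ D := supDist_nonneg
  have hx : (1:ℝ) ∈ Set.Icc (0:ℝ) 1 := ⟨zero_le_one, le_rfl⟩
  have e1 : pIter ν (2*(n+1)+1) 1 = ∫ t in Set.Ioc (0:ℝ) 1, pIter ν (2*n+2) t ∂ν := by
    rw [pIter_odd', show 2*(n+1) = 2*n+2 by ring]
  have e2 : pIter ν' (2*(n+1)+1) 1 = ∫ t in Set.Ioc (0:ℝ) 1, pIter ν' (2*n+2) t ∂ν' := by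
    rw [pIter_odd', show 2*(n+1) = 2*n+2 by ring]
  have i1 := mono_integrableOn (pIter_nonneg_mono ν (2*n+2)).2 ν 1
  have i2 := mono_integrableOn (pIter_nonneg_mono ν' (2*n+2)).2 ν 1
  have split : pIter ν (2*(n+1)+1) 1 - pIter ν' (2*(n+1)+1) 1
      = (∫ t in Set.Ioc (0:ℝ) 1, (pIter ν (2*n+2) t - pIter ν' (2*n+2) t) ∂ν)
        + ((∫ t in Set.Ioc (0:ℝ) 1, pIter ν' (2*n+2) t ∂ν)
          - (∫ t in Set.Ioc (0:ℝ) 1, pIter ν' (2*n+2) t ∂ν')) := by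
    rw [e1, e2, integral_sub i1 i2]; ring
  rw [split]
  have hCn : (0:ℝ) ≤ (2*(n:ℝ)+1)*D := by positivity
  have h1 : |∫ t in Set.Ioc (0:ℝ) 1, (pIter ν (2*n+2) t - pIter ν' (2*n+2) t) ∂ν|
      ≤ (2*(n:ℝ)+1)*D*(1/((n+1).factorial:ℝ)) := by
    apply abs_setIntegral_le ν (i1.sub i2)
    · intro t ht
      calc |pIter ν (2*n+2) t - pIter ν' (2*n+2) t|
          ≤ (2*(n:ℝ)+1)*D*(t^(n+1)/((n+1).factorial:ℝ)) :=
            (pdiff n t ⟨ht.1.le, ht.2⟩).2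
        _ ≤ (2*(n:ℝ)+1)*D*(1/((n+1).factorial:ℝ)) := by
            apply mul_le_mul_of_nonneg_left _ hCn
            have := le_pow_div_factorial_of_le (n+1) ht.1.le ht.2
            simpa using this
    · positivity
  have h2 : |(∫ t in Set.Ioc (0:ℝ) 1, pIter ν' (2*n+2) t ∂ν)
      - (∫ t in Set.Ioc (0:ℝ) 1, pIter ν' (2*n+2) t ∂ν')|
      ≤ D*(1/((n+1).factorial:ℝ)) := by
    have hfe : (fun t => pIter ν' (2*n+2) t)
        = fun t => ∫ s in Set.Ioc (0:ℝ) t, pIter ν' (2*n+1) s := funext (pIter_even' ν' n)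
    rw [show (∫ t in Set.Ioc (0:ℝ) 1, pIter ν' (2*n+2) t ∂ν)
        = ∫ t in Set.Ioc (0:ℝ) 1, (∫ s in Set.Ioc (0:ℝ) t, pIter ν' (2*n+1) s) ∂ν by
          rw [← hfe],
      show (∫ t in Set.Ioc (0:ℝ) 1, pIter ν' (2*n+2) t ∂ν')
        = ∫ t in Set.Ioc (0:ℝ) 1, (∫ s in Set.Ioc (0:ℝ) t, pIter ν' (2*n+1) s) ∂ν' by
          rw [← hfe]]
    have hdn := diff_nu (ν := ν) (ν' := ν') (pIter_nonneg_mono ν' (2*n+1)).1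
      (pIter_nonneg_mono ν' (2*n+1)).2 (hK_one hsupp hsupp')
    apply hdn.trans
    rw [← pIter_even']
    apply mul_le_mul_of_nonneg_left _ hD0
    have := (pIter_le ν' (n+1) 1 hx).1
    rw [show 2*(n+1) = 2*n+2 by ring] at this
    simpa using this
  calc |(∫ t in Set.Ioc (0:ℝ) 1, (pIter ν (2*n+2) t - pIter ν' (2*n+2) t) ∂ν)
        + ((∫ t in Set.Ioc (0:ℝ) 1, pIter ν' (2*n+2) t ∂ν)
          - (∫ t in Set.Ioc (0:ℝ) 1, pIter ν' (2*n+2) t ∂ν'))|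
      ≤ (2*(n:ℝ)+1)*D*(1/((n+1).factorial:ℝ)) + D*(1/((n+1).factorial:ℝ)) :=
        (abs_add_le _ _).trans (add_le_add h1 h2)
    _ = (2*(n:ℝ)+2)*D/((n+1).factorial:ℝ) := by ring
    _ = 2*D/(n.factorial:ℝ) := by
        rw [Nat.factorial_succ]
        push_cast
        have h3 : ((n:ℝ)+1) ≠ 0 := by positivity
        have h4 : (n.factorial:ℝ) ≠ 0 := by positivity
        field_simp

end maindiff

section derivative

lemma two_add_three_le (n : ℕ) : (2*(n:ℝ)+3) ≤ 4 * 2^n := by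
  have h' : n + 1 ≤ 2^n := Nat.lt_two_pow_self (n := n)
  have h : (n:ℝ) + 1 ≤ 2^n := by exact_mod_cast h'
  nlinarith [h]

lemma summable_poly_fact {b : ℝ} (hb : 0 ≤ b) :
    Summable (fun n : ℕ => (2*(n:ℝ)+3) * b^n / n.factorial) := by
  apply Summable.of_nonneg_of_le (fun n => by positivity)
    (fun n => ?_) ((Real.summable_pow_div_factorial (2*b)).mul_left 4)
  have h : (2*(n:ℝ)+3) ≤ 4 * 2^n := two_add_three_le n
  calc (2*(n:ℝ)+3) * b^n / n.factorial ≤ (4 * 2^n) * b^n / n.factorial := by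
        gcongr
    _ = 4 * ((2*b)^n / n.factorial) := by rw [mul_pow]; ring

lemma hasDerivAt_series (a : ℕ → ℝ) (h0 : ∀ n, 0 ≤ a n)
    (hb : ∀ n, a n ≤ 1/(n.factorial:ℝ)) (z : ℝ) :
    HasDerivAt (fun y : ℝ => ∑' n : ℕ, (-1)^n * y^(2*n+1) * a n)
      (∑' n : ℕ, (-1)^n * (((2*n+1:ℕ):ℝ) * z^(2*n)) * a n) z := by
  set R := |z| + 1 with hR
  have hR0 : 0 < R := by positivity
  have hzR : z ∈ Metric.ball (0:ℝ) R := by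
    simp only [Metric.mem_ball, Real.dist_eq, sub_zero]
    linarith [abs_nonneg z]
  have h0R : (0:ℝ) ∈ Metric.ball (0:ℝ) R := by
    simp only [Metric.mem_ball, Real.dist_eq, sub_zero, abs_zero]
    exact hR0
  apply hasDerivAt_tsum_of_isPreconnected
    (u := fun n : ℕ => (2*(n:ℝ)+3) * (R^2)^n / n.factorial)
    (g := fun n y => (-1)^n * y^(2*n+1) * a n)
    (g' := fun n y => (-1)^n * (((2*n+1:ℕ):ℝ) * y^(2*n)) * a n)
    (summable_poly_fact (by positivity)) Metric.isOpen_ball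
    (convex_ball (0:ℝ) R).isPreconnected
    (fun n y _ => (((hasDerivAt_pow (2*n+1) y).const_mul ((-1:ℝ)^n)).mul_const (a n)).congr_deriv
      (by norm_num))
    (fun n y hy => ?_) h0R (by
      apply Summable.congr summable_zero
      intro n
      simp [pow_succ]) hzR
  -- the norm bound
  have hy' : |y| ≤ R := by
    have := hy
    simp only [Metric.mem_ball, Real.dist_eq, sub_zero] at this
    exact this.le
  have habs : ‖(-1:ℝ)^n * (((2*n+1:ℕ):ℝ) * y^(2*n)) * a n‖
      = ((2*n+1:ℕ):ℝ) * |y|^(2*n) * a n := by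
    rw [Real.norm_eq_abs, abs_mul, abs_mul, abs_pow, abs_neg, abs_one, one_pow, one_mul,
      abs_mul, Nat.abs_cast, abs_pow, abs_of_nonneg (h0 n)]
  rw [habs]
  have h1 : ((2*n+1:ℕ):ℝ) ≤ 2*(n:ℝ)+3 := by push_cast; linarith
  have h2 : |y|^(2*n) ≤ (R^2)^n := by
    rw [← pow_mul]
    exact pow_le_pow_left₀ (abs_nonneg y) hy' (2*n)
  calc ((2*n+1:ℕ):ℝ) * |y|^(2*n) * a n
      ≤ (2*(n:ℝ)+3) * (R^2)^n * (1/(n.factorial:ℝ)) := by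
        apply mul_le_mul (mul_le_mul h1 h2 (by positivity) (by positivity)) (hb n)
          (h0 n) (by positivity)
    _ = (2*(n:ℝ)+3) * (R^2)^n / n.factorial := by ring

end derivative

section final

lemma norm_term_le (b : ℕ → ℝ) (h0 : ∀ n, 0 ≤ b n) (hb : ∀ n, b n ≤ 1/(n.factorial:ℝ))
    (z : ℝ) (n : ℕ) : ‖(-1:ℝ)^n * (((2*n+1:ℕ):ℝ) * z^(2*n)) * b n‖
      ≤ (2*(n:ℝ)+3) * (z^2)^n / n.factorial := by
  have habs : ‖(-1:ℝ)^n * (((2*n+1:ℕ):ℝ) * z^(2*n)) * b n‖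
      = ((2*n+1:ℕ):ℝ) * |z|^(2*n) * b n := by
    rw [Real.norm_eq_abs, abs_mul, abs_mul, abs_pow, abs_neg, abs_one, one_pow, one_mul,
      abs_mul, Nat.abs_cast, abs_pow, abs_of_nonneg (h0 n)]
  rw [habs]
  have h1 : ((2*n+1:ℕ):ℝ) ≤ 2*(n:ℝ)+3 := by push_cast; linarith
  have h2 : |z|^(2*n) = (z^2)^n := by rw [pow_mul, sq_abs]
  calc ((2*n+1:ℕ):ℝ) * |z|^(2*n) * b n
      ≤ (2*(n:ℝ)+3) * (z^2)^n * (1/(n.factorial:ℝ)) := by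
        rw [h2]
        apply mul_le_mul (mul_le_mul_of_nonneg_right h1 (by positivity)) (hb n)
          (h0 n) (by positivity)
    _ = (2*(n:ℝ)+3) * (z^2)^n / n.factorial := by ring

lemma summable_term (b : ℕ → ℝ) (h0 : ∀ n, 0 ≤ b n) (hb : ∀ n, b n ≤ 1/(n.factorial:ℝ))
    (z : ℝ) : Summable (fun n : ℕ => (-1:ℝ)^n * (((2*n+1:ℕ):ℝ) * z^(2*n)) * b n) :=
  Summable.of_norm_bounded (summable_poly_fact (by positivity)) (norm_term_le b h0 hb z)

lemma summable_rhs (z : ℝ) :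
    Summable (fun n : ℕ => (2*((n:ℝ)+1)+1) * z^(2*(n+1)) / n.factorial) := by
  have h := (summable_poly_fact (b := z^2) (by positivity)).mul_left (z^2)
  apply h.congr
  intro n
  rw [show z^(2*(n+1)) = z^2 * (z^2)^n by rw [pow_mul, pow_succ]; ring]
  ring

set_option maxHeartbeats 1000000 in
lemma final_bound {a a' : ℕ → ℝ} (h0 : ∀ n, 0 ≤ a n) (h0' : ∀ n, 0 ≤ a' n)
    (hb : ∀ n, a n ≤ 1/(n.factorial:ℝ)) (hb' : ∀ n, a' n ≤ 1/(n.factorial:ℝ))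
    (heq0 : a 0 = a' 0) {D : ℝ} (hD0 : 0 ≤ D)
    (hdiff : ∀ n : ℕ, |a (n+1) - a' (n+1)| ≤ 2*D/(n.factorial:ℝ)) (z : ℝ) :
    |deriv (fun y : ℝ => ∑' n : ℕ, (-1)^n * y^(2*n+1) * a n) z
      - deriv (fun y : ℝ => ∑' n : ℕ, (-1)^n * y^(2*n+1) * a' n) z|
      ≤ 2 * D * ∑' n : ℕ, (2*((n:ℝ)+1)+1) * z^(2*(n+1)) / n.factorial := by
  have hsa := summable_term a h0 hb z
  have hsa' := summable_term a' h0' hb' z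
  have ht : Summable (fun n : ℕ => (-1:ℝ)^n * (((2*n+1:ℕ):ℝ) * z^(2*n)) * (a n - a' n)) :=
    (hsa.sub hsa').congr (fun n => by ring)
  have hteq : ∀ n : ℕ, (-1:ℝ)^n * (((2*n+1:ℕ):ℝ) * z^(2*n)) * a n
      - (-1:ℝ)^n * (((2*n+1:ℕ):ℝ) * z^(2*n)) * a' n
      = (-1:ℝ)^n * (((2*n+1:ℕ):ℝ) * z^(2*n)) * (a n - a' n) := fun n => by ring
  rw [(hasDerivAt_series a h0 hb z).deriv, (hasDerivAt_series a' h0' hb' z).deriv,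
    ← Summable.tsum_sub hsa hsa', tsum_congr hteq]
  have habs : |∑' n : ℕ, (-1:ℝ)^n * (((2*n+1:ℕ):ℝ) * z^(2*n)) * (a n - a' n)|
      ≤ ∑' n : ℕ, |(-1:ℝ)^n * (((2*n+1:ℕ):ℝ) * z^(2*n)) * (a n - a' n)| := by
    simpa only [Real.norm_eq_abs] using norm_tsum_le_tsum_norm (f := fun n : ℕ =>
      (-1:ℝ)^n * (((2*n+1:ℕ):ℝ) * z^(2*n)) * (a n - a' n)) ht.abs
  apply habs.trans
  have ht0 : |(-1:ℝ)^0 * (((2*0+1:ℕ):ℝ) * z^(2*0)) * (a 0 - a' 0)| = 0 := by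
    simp [heq0]
  have hterm : ∀ n : ℕ, |(-1:ℝ)^(n+1) * (((2*(n+1)+1:ℕ):ℝ) * z^(2*(n+1))) * (a (n+1) - a' (n+1))|
      ≤ (2*D) * ((2*((n:ℝ)+1)+1) * z^(2*(n+1)) / n.factorial) := by
    intro n
    have hz2 : (0:ℝ) ≤ z^(2*(n+1)) := by rw [pow_mul]; positivity
    have he : |(-1:ℝ)^(n+1) * (((2*(n+1)+1:ℕ):ℝ) * z^(2*(n+1))) * (a (n+1) - a' (n+1))|
        = ((2*(n+1)+1:ℕ):ℝ) * z^(2*(n+1)) * |a (n+1) - a' (n+1)| := by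
      rw [abs_mul, abs_mul, abs_pow, abs_neg, abs_one, one_pow, one_mul, abs_mul,
        Nat.abs_cast, abs_pow,
        show |z|^(2*(n+1)) = z^(2*(n+1)) by rw [pow_mul, sq_abs, ← pow_mul]]
    rw [he]
    calc ((2*(n+1)+1:ℕ):ℝ) * z^(2*(n+1)) * |a (n+1) - a' (n+1)|
        ≤ ((2*(n+1)+1:ℕ):ℝ) * z^(2*(n+1)) * (2*D/(n.factorial:ℝ)) := by
          apply mul_le_mul_of_nonneg_left (hdiff n)
          exact mul_nonneg (by positivity) hz2
      _ = (2*D) * ((2*((n:ℝ)+1)+1) * z^(2*(n+1)) / n.factorial) := by push_cast; ring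
  calc (∑' n : ℕ, |(-1:ℝ)^n * (((2*n+1:ℕ):ℝ) * z^(2*n)) * (a n - a' n)|)
      = |(-1:ℝ)^0 * (((2*0+1:ℕ):ℝ) * z^(2*0)) * (a 0 - a' 0)|
        + ∑' n : ℕ, |(-1:ℝ)^(n+1) * (((2*(n+1)+1:ℕ):ℝ) * z^(2*(n+1))) * (a (n+1) - a' (n+1))| :=
        Summable.tsum_eq_zero_add ht.abs
    _ = ∑' n : ℕ, |(-1:ℝ)^(n+1) * (((2*(n+1)+1:ℕ):ℝ) * z^(2*(n+1))) * (a (n+1) - a' (n+1))| := by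
        rw [ht0, zero_add]
    _ ≤ ∑' n : ℕ, (2*D) * ((2*((n:ℝ)+1)+1) * z^(2*(n+1)) / n.factorial) :=
        Summable.tsum_le_tsum hterm ((summable_nat_add_iff 1).mpr ht.abs)
          ((summable_rhs z).mul_left (2*D))
    _ = 2*D*∑' n : ℕ, (2*((n:ℝ)+1)+1) * z^(2*(n+1)) / n.factorial := tsum_mul_left

end final

/-- Proposition 3.4: `|sinq'(z) − sinq_m'(z)|` and `|sinp'(z) − sinp_m'(z)|` are
bounded by `2‖F − F_m‖_∞ · ∑_{n≥1} (2n+1) z^{2n}/(n−1)!` (the series reindexed by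
`n ↦ n+1`). -/
theorem stmt11 (ν ν' : Measure ℝ) [IsProbabilityMeasure ν] [IsProbabilityMeasure ν']
    [NullSingletonClass ν] [NullSingletonClass ν']
    (hsupp : ν (Set.Icc (0:ℝ) 1)ᶜ = 0) (hsupp' : ν' (Set.Icc (0:ℝ) 1)ᶜ = 0)
    (z : ℝ) :
    |deriv (sinqF ν) z - deriv (sinqF ν') z|
      ≤ 2 * supDist (distF ν) (distF ν')
          * ∑' n : ℕ, (2*(n+1)+1 : ℝ) * z^(2*(n+1)) / n.factorial ∧
    |deriv (sinpF ν) z - deriv (sinpF ν') z|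
      ≤ 2 * supDist (distF ν) (distF ν')
          * ∑' n : ℕ, (2*(n+1)+1 : ℝ) * z^(2*(n+1)) / n.factorial := by
  have hx1 : (1:ℝ) ∈ Set.Icc (0:ℝ) 1 := ⟨zero_le_one, le_rfl⟩
  have hfact : ∀ n : ℕ, (1:ℝ)/((n+1).factorial:ℝ) ≤ 1/(n.factorial:ℝ) := by
    intro n
    apply one_div_le_one_div_of_le (by positivity)
    exact_mod_cast Nat.factorial_le (Nat.le_succ n)
  constructor
  · have heqf : sinqF ν = fun y : ℝ => ∑' n : ℕ, (-1)^n * y^(2*n+1) * qIter ν (2*n+1) 1 := rfl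
    have heqf' : sinqF ν' = fun y : ℝ => ∑' n : ℕ, (-1)^n * y^(2*n+1) * qIter ν' (2*n+1) 1 := rfl
    have heq0 : qIter ν (2*0+1) 1 = qIter ν' (2*0+1) 1 := by
      rw [qIter_odd', qIter_odd']
      rfl
    rw [heqf, heqf']
    exact final_bound
      (fun n => (qIter_nonneg_mono ν (2*n+1)).1 1)
      (fun n => (qIter_nonneg_mono ν' (2*n+1)).1 1)
      (fun n => le_trans (le_of_le_of_eq (qIter_le ν n 1 hx1).2 (by rw [one_pow])) (hfact n))
      (fun n => le_trans (le_of_le_of_eq (qIter_le ν' n 1 hx1).2 (by rw [one_pow])) (hfact n))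
      heq0 supDist_nonneg (fun n => qtop (ν := ν) (ν' := ν') n) z
  · have heqf : sinpF ν = fun y : ℝ => ∑' n : ℕ, (-1)^n * y^(2*n+1) * pIter ν (2*n+1) 1 := rfl
    have heqf' : sinpF ν' = fun y : ℝ => ∑' n : ℕ, (-1)^n * y^(2*n+1) * pIter ν' (2*n+1) 1 := rfl
    have heq0 : pIter ν (2*0+1) 1 = pIter ν' (2*0+1) 1 := by
      rw [pIter_odd', pIter_odd']
      have e1 : (∫ t in Set.Ioc (0:ℝ) 1, pIter ν (2*0) t ∂ν) = distF ν 1 := by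
        rw [show pIter ν (2*0) = fun _ => (1:ℝ) from rfl]
        rw [setIntegral_const, smul_eq_mul, mul_one, measureReal_def, toReal_Ioc_eq_distF]
      have e2 : (∫ t in Set.Ioc (0:ℝ) 1, pIter ν' (2*0) t ∂ν') = distF ν' 1 := by
        rw [show pIter ν' (2*0) = fun _ => (1:ℝ) from rfl]
        rw [setIntegral_const, smul_eq_mul, mul_one, measureReal_def, toReal_Ioc_eq_distF]
      rw [e1, e2, distF_one hsupp, distF_one hsupp']
    rw [heqf, heqf']
    exact final_bound
      (fun n => (pIter_nonneg_mono ν (2*n+1)).1 1)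
      (fun n => (pIter_nonneg_mono ν' (2*n+1)).1 1)
      (fun n => le_of_le_of_eq (pIter_le ν n 1 hx1).2 (by rw [one_pow]))
      (fun n => le_of_le_of_eq (pIter_le ν' n 1 hx1).2 (by rw [one_pow]))
      heq0 supDist_nonneg (fun n => ptop hsupp hsupp' n) z
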